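/- The sequence T_n = (1/n²) · Σ_{j|n} φ(j)² · j^{n/j} · (n/j)! satisfies T_n / (n-2)! → 1 as n → ∞. -/

import Mathlib

open Filter

/-- `T_n = (1/n²) ∑_{j|n} φ(j)² j^{n/j} (n/j)!`, as a real number. -/
noncomputable def T (n : ℕ) : ℝ :=
  (1 / (n : ℝ) ^ 2) *
    ∑ j ∈ n.divisors, ((Nat.totient j : ℝ)) ^ 2 * (j : ℝ) ^ (n / j) * ((n / j).factorial : ℝ)

/-!
The divisor `j = 1` contributes `n! = (1 - 1/n) · n² (n-2)!`. A divisor `j ≥ 2` with `m = n / j`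
contributes `φ(j)² j^m m! ≤ n² (j m)^m ≤ n² n^(n/2)`, and there are fewer than `n` of them.
Since `n^(n/2+1) (n/2)! ≤ 3 · 24^(n/2) (n-2)!`, the other divisors together contribute
`O(24^(n/2) / (n/2)!) · n² (n-2)!`, which is negligible.
-/

open Finset Nat

def divisorTail (n : ℕ) : ℕ :=
  ∑ j ∈ n.divisors.erase 1, φ j ^ 2 * j ^ (n / j) * (n / j)!

lemma sum_divisors_eq_factorial_add_divisorTail {n : ℕ} (hn : n ≠ 0) :
    ∑ j ∈ n.divisors, φ j ^ 2 * j ^ (n / j) * (n / j)! = n ! + divisorTail n := by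
  rw [← add_sum_erase _ _ (one_mem_divisors.2 hn)]
  simp [divisorTail]

lemma pow_mul_factorial_div_le_pow {n j : ℕ} (hj : j ∣ n) :
    j ^ (n / j) * (n / j)! ≤ n ^ (n / j) :=
  calc j ^ (n / j) * (n / j)! ≤ j ^ (n / j) * (n / j) ^ (n / j) :=
        Nat.mul_le_mul_left _ (factorial_le_pow _)
    _ = n ^ (n / j) := by rw [← mul_pow, Nat.mul_div_cancel' hj]

lemma totient_sq_mul_pow_mul_factorial_le {n j : ℕ} (hn : n ≠ 0) (hj : j ∣ n) (hj2 : 2 ≤ j) :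
    φ j ^ 2 * j ^ (n / j) * (n / j)! ≤ n ^ (n / 2 + 2) := by
  have hjn : j ≤ n := Nat.le_of_dvd (pos_of_ne_zero hn) hj
  calc φ j ^ 2 * j ^ (n / j) * (n / j)! = φ j ^ 2 * (j ^ (n / j) * (n / j)!) := by ring
    _ ≤ n ^ 2 * n ^ (n / 2) := by
        gcongr
        · exact (totient_le j).trans hjn
        · calc j ^ (n / j) * (n / j)! ≤ n ^ (n / j) := pow_mul_factorial_div_le_pow hj
            _ ≤ n ^ (n / 2) :=
                Nat.pow_le_pow_right (pos_of_ne_zero hn) (Nat.div_le_div_left hj2 two_pos)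
    _ = n ^ (n / 2 + 2) := by ring

lemma divisorTail_le (n : ℕ) : divisorTail n ≤ n ^ (n / 2 + 3) := by
  have hterm : ∀ j ∈ n.divisors.erase 1, φ j ^ 2 * j ^ (n / j) * (n / j)! ≤ n ^ (n / 2 + 2) := by
    intro j hj
    obtain ⟨hj1, hjn⟩ := mem_erase.1 hj
    obtain ⟨hdvd, hn⟩ := mem_divisors.1 hjn
    have := pos_of_mem_divisors hjn
    exact totient_sq_mul_pow_mul_factorial_le hn hdvd (by omega)
  calc divisorTail n ≤ #(n.divisors.erase 1) * n ^ (n / 2 + 2) := by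
        simpa [divisorTail] using sum_le_card_nsmul _ _ _ hterm
    _ ≤ n * n ^ (n / 2 + 2) :=
        Nat.mul_le_mul_right _ ((card_erase_le).trans (card_divisors_le_self n))
    _ = n ^ (n / 2 + 3) := by ring

lemma pow_three_le_eight_pow (k : ℕ) : k ^ 3 ≤ 8 ^ k :=
  calc k ^ 3 ≤ (2 ^ k) ^ 3 := Nat.pow_le_pow_left (Nat.lt_two_pow_self).le 3
    _ = 8 ^ k := by rw [← pow_mul, mul_comm, pow_mul]; norm_num

lemma pow_succ_le_of_le_three_mul {n k : ℕ} (hk : 2 ≤ k) (hn : n ≤ 3 * k) :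
    n ^ (k + 1) ≤ 3 * 24 ^ k * k ^ (k - 2) :=
  calc n ^ (k + 1) ≤ (3 * k) ^ (k + 1) := Nat.pow_le_pow_left hn _
    _ = 3 * 3 ^ k * (k ^ 3 * k ^ (k - 2)) := by
        rw [← pow_add, show 3 + (k - 2) = k + 1 by omega]
        ring
    _ ≤ 3 * 3 ^ k * (8 ^ k * k ^ (k - 2)) :=
        Nat.mul_le_mul_left _ (Nat.mul_le_mul_right _ (pow_three_le_eight_pow k))
    _ = 3 * 24 ^ k * k ^ (k - 2) := by rw [show (24 : ℕ) = 3 * 8 by norm_num, mul_pow]; ring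

lemma factorial_mul_pow_sub_two_le {k m : ℕ} (hk : 2 ≤ k) (hm : 2 * k ≤ m + 2) :
    k ! * k ^ (k - 2) ≤ m ! :=
  calc k ! * k ^ (k - 2) ≤ k ! * (k + 1) ^ (m - k) :=
        Nat.mul_le_mul_left _ ((Nat.pow_le_pow_left k.le_succ _).trans
          (Nat.pow_le_pow_right k.succ_pos (by omega)))
    _ ≤ (k + (m - k))! := factorial_mul_pow_le_factorial
    _ = m ! := by congr 1; omega

lemma pow_succ_half_mul_factorial_half_le {n : ℕ} (hn : 4 ≤ n) :
    n ^ (n / 2 + 1) * (n / 2)! ≤ 3 * 24 ^ (n / 2) * (n - 2)! :=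
  calc n ^ (n / 2 + 1) * (n / 2)! ≤ 3 * 24 ^ (n / 2) * (n / 2) ^ (n / 2 - 2) * (n / 2)! := by
        gcongr
        exact pow_succ_le_of_le_three_mul (by omega) (by omega)
    _ = 3 * 24 ^ (n / 2) * ((n / 2)! * (n / 2) ^ (n / 2 - 2)) := by ring
    _ ≤ 3 * 24 ^ (n / 2) * (n - 2)! := by
        gcongr
        exact factorial_mul_pow_sub_two_le (by omega) (by omega)

lemma divisorTail_mul_factorial_half_le {n : ℕ} (hn : 4 ≤ n) :
    divisorTail n * (n / 2)! ≤ 3 * 24 ^ (n / 2) * (n ^ 2 * (n - 2)!) :=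
  calc divisorTail n * (n / 2)! ≤ n ^ (n / 2 + 3) * (n / 2)! := by gcongr; exact divisorTail_le n
    _ = n ^ 2 * (n ^ (n / 2 + 1) * (n / 2)!) := by ring
    _ ≤ n ^ 2 * (3 * 24 ^ (n / 2) * (n - 2)!) :=
        Nat.mul_le_mul_left _ (pow_succ_half_mul_factorial_half_le hn)
    _ = 3 * 24 ^ (n / 2) * (n ^ 2 * (n - 2)!) := by ring

lemma tendsto_divisorTail_div :
    Tendsto (fun n : ℕ => (divisorTail n : ℝ) / ((n : ℝ) ^ 2 * ((n - 2)! : ℝ))) atTop (nhds 0) := by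
  have hhalf : Tendsto (fun n : ℕ => n / 2) atTop atTop :=
    tendsto_atTop_atTop.2 fun b => ⟨2 * b, fun a ha => by omega⟩
  have hbound : Tendsto (fun n : ℕ => 3 * ((24 : ℝ) ^ (n / 2) / ((n / 2)! : ℝ))) atTop (nhds 0) := by
    simpa using ((FloorSemiring.tendsto_pow_div_factorial_atTop (24 : ℝ)).comp hhalf).const_mul 3
  refine squeeze_zero' (Eventually.of_forall fun n => by positivity) ?_ hbound
  filter_upwards [eventually_ge_atTop 4] with n hn
  have hpos : (0 : ℝ) < (n : ℝ) ^ 2 * ((n - 2)! : ℝ) := by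
    have : (0 : ℝ) < n := by exact_mod_cast (by omega : 0 < n)
    positivity
  rw [← mul_div_assoc, div_le_div_iff₀ hpos (by positivity)]
  exact_mod_cast divisorTail_mul_factorial_half_le hn

lemma T_div_factorial_sub_two_eq {n : ℕ} (hn : 2 ≤ n) :
    T n / ((n - 2)! : ℝ) =
      (1 - 1 / (n : ℝ)) + (divisorTail n : ℝ) / ((n : ℝ) ^ 2 * ((n - 2)! : ℝ)) := by
  obtain ⟨m, rfl⟩ : ∃ m, n = m + 2 := ⟨n - 2, by omega⟩
  have hsum := congrArg (fun x : ℕ => (x : ℝ)) (sum_divisors_eq_factorial_add_divisorTail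
    (n := m + 2) (by omega))
  push_cast at hsum
  simp only [T, hsum, Nat.add_sub_cancel, factorial_succ]
  push_cast
  field_simp
  ring

theorem stmt_14 :
    Tendsto (fun n : ℕ => T n / ((n - 2).factorial : ℝ)) atTop (nhds 1) := by
  have hmain : Tendsto (fun n : ℕ => 1 - 1 / (n : ℝ)) atTop (nhds 1) := by
    simpa using tendsto_const_nhds.sub (tendsto_one_div_atTop_nhds_zero_nat (𝕜 := ℝ))
  have heq := (eventually_ge_atTop 2).mono fun n hn => (T_div_factorial_sub_two_eq hn).symm
  simpa using (hmain.add tendsto_divisorTail_div).congr' heq
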